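/- arXiv:2412.15633 — 3 statements merged into one kernel-verified Lean document; each statement's English description precedes it below -/
import Mathlib

section
/- Let h : ℝ^p → (−∞, +∞] be a proper convex function and f(θ) = (1/2)‖y − Xθ‖₂² + h(θ). If θ₁ and θ₂ are both minimizers of f, then Xθ₁ = Xθ₂ and h(θ₁) = h(θ₂). -/
open Matrix

/-- If `h : ℝ^p → (−∞, +∞]` is a proper convex function and `θ₁, θ₂` both minimize
`f(θ) = (1/2)‖y − Xθ‖₂² + h(θ)`, then `Xθ₁ = Xθ₂` and `h(θ₁) = h(θ₂)`. -/
theorem penalized_ls_same_prediction_and_penalty {n p : ℕ}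
    (X : Matrix (Fin n) (Fin p) ℝ) (y : Fin n → ℝ)
    (h : (Fin p → ℝ) → EReal)
    (hproper_bot : ∀ θ, h θ ≠ ⊥)
    (hproper_top : ∃ θ, h θ ≠ ⊤)
    (hconv : ∀ (θ θ' : Fin p → ℝ) (a b : ℝ), 0 ≤ a → 0 ≤ b → a + b = 1 →
      h (a • θ + b • θ') ≤ (a : EReal) * h θ + (b : EReal) * h θ')
    (θ₁ θ₂ : Fin p → ℝ)
    (h₁ : ∀ θ' : Fin p → ℝ,
      (((1/2) * ((y - X.mulVec θ₁) ⬝ᵥ (y - X.mulVec θ₁)) : ℝ) : EReal) + h θ₁ ≤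
      (((1/2) * ((y - X.mulVec θ') ⬝ᵥ (y - X.mulVec θ')) : ℝ) : EReal) + h θ')
    (h₂ : ∀ θ' : Fin p → ℝ,
      (((1/2) * ((y - X.mulVec θ₂) ⬝ᵥ (y - X.mulVec θ₂)) : ℝ) : EReal) + h θ₂ ≤
      (((1/2) * ((y - X.mulVec θ') ⬝ᵥ (y - X.mulVec θ')) : ℝ) : EReal) + h θ') :
    X.mulVec θ₁ = X.mulVec θ₂ ∧ h θ₁ = h θ₂ := by

  obtain ⟨θ₀, hθ₀⟩ := hproper_top
  -- h θ₁ and h θ₂ are finite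
  have hfin : ∀ θ, (∀ θ' : Fin p → ℝ,
      (((1/2) * ((y - X.mulVec θ) ⬝ᵥ (y - X.mulVec θ)) : ℝ) : EReal) + h θ ≤
      (((1/2) * ((y - X.mulVec θ') ⬝ᵥ (y - X.mulVec θ')) : ℝ) : EReal) + h θ') → h θ ≠ ⊤ := by
    intro θ hmin htop
    have := hmin θ₀
    rw [htop] at this
    have hlt : (((1/2) * ((y - X.mulVec θ₀) ⬝ᵥ (y - X.mulVec θ₀)) : ℝ) : EReal) + h θ₀ < ⊤ := by
      apply EReal.add_lt_top
      · exact EReal.coe_ne_top _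
      · exact hθ₀
    have htopeq : (((1/2) * ((y - X.mulVec θ) ⬝ᵥ (y - X.mulVec θ)) : ℝ) : EReal) + (⊤ : EReal) = ⊤ :=
      EReal.add_top_of_ne_bot (EReal.coe_ne_bot _)
    rw [htopeq] at this
    exact absurd (top_le_iff.mp this) (ne_of_lt hlt)
  have hne₁ := hfin θ₁ h₁
  have hne₂ := hfin θ₂ h₂
  lift h θ₁ to ℝ using ⟨hne₁, hproper_bot θ₁⟩ with r₁ hr₁
  lift h θ₂ to ℝ using ⟨hne₂, hproper_bot θ₂⟩ with r₂ hr₂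
  set u := y - X.mulVec θ₁ with hu
  set v := y - X.mulVec θ₂ with hv
  -- midpoint
  set θₘ := (1/2 : ℝ) • θ₁ + (1/2 : ℝ) • θ₂ with hθₘ
  have hXm : X.mulVec θₘ = (1/2 : ℝ) • X.mulVec θ₁ + (1/2 : ℝ) • X.mulVec θ₂ := by
    rw [hθₘ, Matrix.mulVec_add, Matrix.mulVec_smul, Matrix.mulVec_smul]
  have hwm : y - X.mulVec θₘ = (1/2 : ℝ) • u + (1/2 : ℝ) • v := by
    rw [hXm, hu, hv]; ext i; simp [Pi.smul_apply, Pi.sub_apply]; ring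
  have hAm : (y - X.mulVec θₘ) ⬝ᵥ (y - X.mulVec θₘ)
      = (1/4 : ℝ) * (u ⬝ᵥ u) + (1/2 : ℝ) * (u ⬝ᵥ v) + (1/4 : ℝ) * (v ⬝ᵥ v) := by
    rw [hwm]
    simp [add_dotProduct, dotProduct_add, smul_dotProduct, dotProduct_smul, smul_eq_mul,
      dotProduct_comm v u]
    ring
  have hconvm : h θₘ ≤ (((1/2 : ℝ) * r₁ + (1/2 : ℝ) * r₂ : ℝ) : EReal) := by
    have := hconv θ₁ θ₂ (1/2) (1/2) (by norm_num) (by norm_num) (by norm_num)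
    rw [← hr₁, ← hr₂] at this
    calc h θₘ ≤ ((1/2 : ℝ) : EReal) * (r₁ : EReal) + ((1/2 : ℝ) : EReal) * (r₂ : EReal) := this
      _ = _ := by rw [← EReal.coe_mul, ← EReal.coe_mul, ← EReal.coe_add]
  -- equality of objective values, as reals
  have e12 := h₁ θ₂
  have e21 := h₂ θ₁
  rw [← hr₂, ← hv] at e12
  rw [← hr₁, ← hu] at e21
  rw [← EReal.coe_add, ← EReal.coe_add, EReal.coe_le_coe_iff] at e12 e21
  have heq : (1/2 : ℝ) * (u ⬝ᵥ u) + r₁ = (1/2 : ℝ) * (v ⬝ᵥ v) + r₂ := le_antisymm e12 e21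
  -- minimality at the midpoint
  have em := h₁ θₘ
  have em' : (1/2 : ℝ) * (u ⬝ᵥ u) + r₁ ≤
      (1/2 : ℝ) * ((y - X.mulVec θₘ) ⬝ᵥ (y - X.mulVec θₘ)) + ((1/2 : ℝ) * r₁ + (1/2 : ℝ) * r₂) := by
    have := le_trans em (add_le_add (le_refl _) hconvm)
    rw [← EReal.coe_add, ← EReal.coe_add, EReal.coe_le_coe_iff] at this
    exact this
  rw [hAm] at em'
  -- deduce (u - v) ⬝ (u - v) ≤ 0
  have hdiff : (u - v) ⬝ᵥ (u - v) ≤ 0 := by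
    have hexp : (u - v) ⬝ᵥ (u - v) = (u ⬝ᵥ u) - 2 * (u ⬝ᵥ v) + (v ⬝ᵥ v) := by
      simp [sub_dotProduct, dotProduct_sub, dotProduct_comm v u]
      ring
    rw [hexp]; nlinarith [em', heq]
  have hnonneg : 0 ≤ (u - v) ⬝ᵥ (u - v) := Finset.sum_nonneg (fun i _ => mul_self_nonneg _)
  have hzero : u - v = 0 := by
    have := le_antisymm hdiff hnonneg
    exact (dotProduct_self_eq_zero).mp this
  have hX : X.mulVec θ₁ = X.mulVec θ₂ := by
    have : v - u = 0 := by rw [← neg_sub]; simp [hzero]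
    have h2 : X.mulVec θ₁ - X.mulVec θ₂ = 0 := by
      rw [hu, hv] at this; ext i; have := congrFun this i; simpa [Pi.sub_apply] using this
    exact sub_eq_zero.mp h2
  refine ⟨hX, ?_⟩
  have huv : u = v := sub_eq_zero.mp hzero
  rw [huv] at heq
  have : r₁ = r₂ := by linarith
  exact_mod_cast this
end

section
/- Any two lasso solutions give the same linear prediction: if θ₁, θ₂ both minimize θ ↦ (1/2)‖y − Xθ‖₂² + λ‖θ‖₁ with λ > 0, then Xθ₁ = Xθ₂ and ‖θ₁‖₁ = ‖θ₂‖₁. -/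
open Matrix

/-- Any two lasso solutions give the same prediction and the same l₁ norm. -/
theorem lasso_same_prediction_and_l1 {n p : ℕ}
    (X : Matrix (Fin n) (Fin p) ℝ) (y : Fin n → ℝ) (lam : ℝ) (hlam : 0 < lam)
    (θ₁ θ₂ : Fin p → ℝ)
    (h₁ : ∀ θ' : Fin p → ℝ,
      (1/2) * ((y - X.mulVec θ₁) ⬝ᵥ (y - X.mulVec θ₁)) + lam * ∑ j, |θ₁ j| ≤
      (1/2) * ((y - X.mulVec θ') ⬝ᵥ (y - X.mulVec θ')) + lam * ∑ j, |θ' j|)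
    (h₂ : ∀ θ' : Fin p → ℝ,
      (1/2) * ((y - X.mulVec θ₂) ⬝ᵥ (y - X.mulVec θ₂)) + lam * ∑ j, |θ₂ j| ≤
      (1/2) * ((y - X.mulVec θ') ⬝ᵥ (y - X.mulVec θ')) + lam * ∑ j, |θ' j|) :
    X.mulVec θ₁ = X.mulVec θ₂ ∧ (∑ j, |θ₁ j|) = ∑ j, |θ₂ j| := by
  set v₁ := X.mulVec θ₁ with hv₁
  set v₂ := X.mulVec θ₂ with hv₂
  have hdot : ∀ u : Fin n → ℝ, u ⬝ᵥ u = ∑ i, (u i)^2 := by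
    intro u; simp [dotProduct, sq]
  set m : Fin p → ℝ := fun j => (θ₁ j + θ₂ j)/2 with hmdef
  have hm : X.mulVec m = fun i => (v₁ i + v₂ i)/2 := by
    funext i
    simp only [hv₁, hv₂, Matrix.mulVec, dotProduct, hmdef]
    rw [← Finset.sum_add_distrib, Finset.sum_div]
    apply Finset.sum_congr rfl
    intro j _
    ring
  -- quadratic identity
  have hquad : (y - X.mulVec m) ⬝ᵥ (y - X.mulVec m) =
      ((y - v₁) ⬝ᵥ (y - v₁) + (y - v₂) ⬝ᵥ (y - v₂))/2 - (∑ i, (v₁ i - v₂ i)^2)/4 := by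
    rw [hdot, hdot, hdot, hm]
    rw [← Finset.sum_add_distrib, Finset.sum_div, Finset.sum_div,
      ← Finset.sum_sub_distrib]
    apply Finset.sum_congr rfl
    intro i _
    simp only [Pi.sub_apply]
    ring
  -- l1 convexity
  have hl1 : (∑ j, |m j|) ≤ ((∑ j, |θ₁ j|) + ∑ j, |θ₂ j|)/2 := by
    rw [← Finset.sum_add_distrib, Finset.sum_div]
    apply Finset.sum_le_sum
    intro j _
    have : |m j| = |θ₁ j + θ₂ j|/2 := by
      rw [hmdef]; rw [abs_div]; norm_num
    rw [this]
    have := abs_add_le (θ₁ j) (θ₂ j)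
    linarith
  have he : (1/2) * ((y - v₁) ⬝ᵥ (y - v₁)) + lam * ∑ j, |θ₁ j| =
      (1/2) * ((y - v₂) ⬝ᵥ (y - v₂)) + lam * ∑ j, |θ₂ j| :=
    le_antisymm (h₁ θ₂) (h₂ θ₁)
  have hD : (∑ i, (v₁ i - v₂ i)^2) ≤ 0 := by
    have h := h₁ m
    rw [hquad] at h
    nlinarith [h₂ θ₁]
  have hD0 : ∀ i, (v₁ i - v₂ i)^2 = 0 := by
    intro i
    have hnn : ∀ i ∈ Finset.univ, (0:ℝ) ≤ (v₁ i - v₂ i)^2 := fun i _ => sq_nonneg _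
    have := (Finset.sum_eq_zero_iff_of_nonneg hnn).mp
      (le_antisymm hD (Finset.sum_nonneg hnn))
    exact this i (Finset.mem_univ i)
  have hveq : v₁ = v₂ := by
    funext i
    have := hD0 i
    have := sq_eq_zero_iff.mp this
    linarith
  refine ⟨hveq, ?_⟩
  rw [hveq] at he
  have := mul_left_cancel₀ (ne_of_gt hlam) (by linarith : lam * ∑ j, |θ₁ j| = lam * ∑ j, |θ₂ j|)
  exact this
end

section
/- The ridgeless estimator X⁺y is the unique minimizer of θ ↦ (1/2)‖y − Xθ‖₂² + (1/2) θ' P_{Ker(X)} θ, where P_{Ker(X)} is the orthogonal projection onto Ker(X). -/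
open Matrix

/-- `Xp` is the Moore–Penrose pseudoinverse of `X` (the four Penrose conditions). -/
def IsMoorePenrose {n p : ℕ} (X : Matrix (Fin n) (Fin p) ℝ)
    (Xp : Matrix (Fin p) (Fin n) ℝ) : Prop :=
  X * Xp * X = X ∧ Xp * X * Xp = Xp ∧ (X * Xp)ᵀ = X * Xp ∧ (Xp * X)ᵀ = Xp * X

/-- `P` is the orthogonal projection matrix onto `Ker(X)`. -/
def IsOrthProjOntoKer {n p : ℕ} (X : Matrix (Fin n) (Fin p) ℝ)
    (P : Matrix (Fin p) (Fin p) ℝ) : Prop :=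
  P * P = P ∧ Pᵀ = P ∧ (∀ v : Fin p → ℝ, X.mulVec (P.mulVec v) = 0) ∧
    (∀ v : Fin p → ℝ, X.mulVec v = 0 → P.mulVec v = v)

private lemma dp_self_nonneg {k : ℕ} (v : Fin k → ℝ) : 0 ≤ v ⬝ᵥ v :=
  Finset.sum_nonneg fun i _ => mul_self_nonneg (v i)

private lemma matrix_ext_mulVec {a b : ℕ} {A B : Matrix (Fin a) (Fin b) ℝ}
    (h : ∀ v, A.mulVec v = B.mulVec v) : A = B := by
  ext i j
  have := congrFun (h (Pi.single j 1)) i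
  simpa [Matrix.mulVec_single_one] using this

/-- The ridgeless estimator `X⁺y` is the unique minimizer of
`θ ↦ (1/2)‖y − Xθ‖₂² + (1/2)θ'P_{Ker(X)}θ`. -/
theorem ridgeless_penalized_expression {n p : ℕ}
    (X : Matrix (Fin n) (Fin p) ℝ) (Xp : Matrix (Fin p) (Fin n) ℝ)
    (hXp : IsMoorePenrose X Xp) (y : Fin n → ℝ)
    (P : Matrix (Fin p) (Fin p) ℝ) (hP : IsOrthProjOntoKer X P) :
    ∀ θ : Fin p → ℝ,
      (∀ θ' : Fin p → ℝ,
        (1/2) * ((y - X.mulVec θ) ⬝ᵥ (y - X.mulVec θ)) + (1/2) * (θ ⬝ᵥ P.mulVec θ) ≤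
        (1/2) * ((y - X.mulVec θ') ⬝ᵥ (y - X.mulVec θ')) + (1/2) * (θ' ⬝ᵥ P.mulVec θ')) ↔
      θ = Xp.mulVec y := by
  obtain ⟨h1, h2, h3, h4⟩ := hXp
  obtain ⟨hPP, hPt, hKer, hFix⟩ := hP
  -- X * P = 0
  have hXP : X * P = 0 := by
    apply matrix_ext_mulVec
    intro v
    simp [← Matrix.mulVec_mulVec, hKer v]
  -- P = 1 - Xp * X
  have hPeq : P = 1 - Xp * X := by
    have hfix : P * (1 - Xp * X) = 1 - Xp * X := by
      apply matrix_ext_mulVec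
      intro v
      rw [← Matrix.mulVec_mulVec]
      apply hFix
      rw [Matrix.mulVec_mulVec]
      have : X * (1 - Xp * X) = 0 := by
        rw [Matrix.mul_sub, Matrix.mul_one, ← Matrix.mul_assoc, h1, sub_self]
      rw [this, Matrix.zero_mulVec]
    have hzero : P * (Xp * X) = 0 := by
      have ht : (P * (Xp * X))ᵀ = 0 := by
        rw [Matrix.transpose_mul, h4, hPt, Matrix.mul_assoc, hXP, Matrix.mul_zero]
      calc P * (Xp * X) = (P * (Xp * X))ᵀᵀ := (Matrix.transpose_transpose _).symm
        _ = 0 := by rw [ht, Matrix.transpose_zero]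
    calc P = P * (Xp * X) + P * (1 - Xp * X) := by
          rw [← Matrix.mul_add, add_sub_cancel, Matrix.mul_one]
      _ = 1 - Xp * X := by rw [hzero, hfix, zero_add]
  set θs := Xp.mulVec y with hθs
  -- P θs = 0
  have hPθs : P.mulVec θs = 0 := by
    rw [hPeq, hθs, Matrix.sub_mulVec, Matrix.one_mulVec, Matrix.mulVec_mulVec, h2, sub_self]
  -- Xᵀ (y - X θs) = 0
  have hres : Xᵀ.mulVec (y - X.mulVec θs) = 0 := by
    rw [Matrix.mulVec_sub, hθs, Matrix.mulVec_mulVec, Matrix.mulVec_mulVec]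
    have : Xᵀ * X * Xp = Xᵀ := by
      rw [Matrix.mul_assoc, ← h3, ← Matrix.transpose_mul, h1]
    rw [this, sub_self]
  -- Key identity
  have key : ∀ d : Fin p → ℝ,
      (y - X.mulVec (θs + d)) ⬝ᵥ (y - X.mulVec (θs + d)) + (θs + d) ⬝ᵥ P.mulVec (θs + d)
      = (y - X.mulVec θs) ⬝ᵥ (y - X.mulVec θs) + θs ⬝ᵥ P.mulVec θs
        + (X.mulVec d ⬝ᵥ X.mulVec d + P.mulVec d ⬝ᵥ P.mulVec d) := by
    intro d
    have hsplit : y - X.mulVec (θs + d) = (y - X.mulVec θs) - X.mulVec d := by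
      rw [Matrix.mulVec_add]; abel
    have hcross : (y - X.mulVec θs) ⬝ᵥ X.mulVec d = 0 := by
      rw [Matrix.dotProduct_mulVec, ← Matrix.mulVec_transpose, hres, zero_dotProduct]
    have hcross' : X.mulVec d ⬝ᵥ (y - X.mulVec θs) = 0 := by
      rw [dotProduct_comm]; exact hcross
    have hPd : ∀ u v : Fin p → ℝ, u ⬝ᵥ P.mulVec v = P.mulVec u ⬝ᵥ P.mulVec v := by
      intro u v
      conv_lhs => rw [← hPP, ← Matrix.mulVec_mulVec, Matrix.dotProduct_mulVec,
        ← Matrix.mulVec_transpose, hPt]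
    have hθsPd : θs ⬝ᵥ P.mulVec d = 0 := by
      rw [hPd, hPθs, zero_dotProduct]
    have hdPθs : d ⬝ᵥ P.mulVec θs = 0 := by
      rw [hPθs, dotProduct_zero]
    have hθsPθs : θs ⬝ᵥ P.mulVec θs = 0 := by
      rw [hPθs, dotProduct_zero]
    have hc2 : X *ᵥ d ⬝ᵥ y = X *ᵥ d ⬝ᵥ X *ᵥ θs := by
      have h := hcross'
      rw [dotProduct_sub, sub_eq_zero] at h
      exact h
    rw [hsplit, Matrix.mulVec_add]
    simp only [sub_dotProduct, dotProduct_sub, add_dotProduct,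
      dotProduct_add, hcross, hcross', hθsPd, hdPθs, hθsPθs, hc2]
    rw [hPd d d]
    ring
  intro θ
  constructor
  · intro hmin
    have h := hmin θs
    set d := θ - θs with hd
    have hθ : θ = θs + d := by rw [hd]; abel
    have hk := key d
    rw [← hθ] at hk
    -- From minimality at θs and the key identity:
    have hnn1 : 0 ≤ X.mulVec d ⬝ᵥ X.mulVec d := dp_self_nonneg _
    have hnn2 : 0 ≤ P.mulVec d ⬝ᵥ P.mulVec d := dp_self_nonneg _
    have hsum : X.mulVec d ⬝ᵥ X.mulVec d + P.mulVec d ⬝ᵥ P.mulVec d ≤ 0 := by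
      nlinarith [h, hk]
    have hX0 : X.mulVec d ⬝ᵥ X.mulVec d = 0 := by linarith
    have hP0 : P.mulVec d ⬝ᵥ P.mulVec d = 0 := by linarith
    have hXd : X.mulVec d = 0 := dotProduct_self_eq_zero.mp hX0
    have hPdd : P.mulVec d = 0 := dotProduct_self_eq_zero.mp hP0
    have : d = 0 := by rw [← hFix d hXd, hPdd]
    rw [hθ, this, add_zero]
  · intro hθ θ'
    subst hθ
    set d := θ' - θs with hd
    have hθ' : θ' = θs + d := by rw [hd]; abel
    have hk := key d
    rw [← hθ'] at hk
    have hnn1 : 0 ≤ X.mulVec d ⬝ᵥ X.mulVec d := dp_self_nonneg _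
    have hnn2 : 0 ≤ P.mulVec d ⬝ᵥ P.mulVec d := dp_self_nonneg _
    nlinarith [hk]
end
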